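/- arXiv:1901.09736 — 3 statements merged into one kernel-verified Lean document; each statement's English description precedes it below -/
import Mathlib

section
/- Under the Viscous Setup, there exists a constant M > 0 depending only on γ and n (independent of ε, δ, a, b, ρ̄) such that for every integer l with 0 ≤ l ≤ n−1, and for every r ∈ [a,b), sup_{t∈[0,T]} ∫_r^b ρ(t,y)^γ y^l dy ≤ M(r^{l+1−n} E₀ + ρ̄^γ b^{l+1}). -/
open MeasureTheory Real Set

noncomputable section

/-- The internal energy function `h_δ(ρ) = κρ^γ/(γ-1) + δρ²`. -/
def hDelta (γ κ δ ρ : ℝ) : ℝ := κ * ρ ^ γ / (γ - 1) + δ * ρ ^ (2 : ℕ)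

/-- Its derivative `h_δ'(ρ̄) = κγρ̄^{γ-1}/(γ-1) + 2δρ̄`. -/
def hDelta' (γ κ δ ρbar : ℝ) : ℝ := κ * γ * ρbar ^ (γ - 1) / (γ - 1) + 2 * δ * ρbar

/-- Its second derivative `h_δ''(ρ) = κγρ^{γ-2} + 2δ`. -/
def hDelta'' (γ κ δ ρ : ℝ) : ℝ := κ * γ * ρ ^ (γ - 2) + 2 * δ

/-- The relative internal energy `h̄_δ(ρ,ρ̄) = h_δ(ρ) − h_δ(ρ̄) − h_δ'(ρ̄)(ρ−ρ̄)`. -/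
def hBarDelta (γ κ δ ρ ρbar : ℝ) : ℝ :=
  hDelta γ κ δ ρ - hDelta γ κ δ ρbar - hDelta' γ κ δ ρbar * (ρ - ρbar)

/-- The Viscous Setup: `n ≥ 2`, `γ > 1`, `κ = (γ−1)²/(4γ)`, `p_δ(ρ) = κρ^γ + δρ²`;
`T > 0`, `ε > 0`, `δ > 0`, `0 < a < 1 < b`, `ρ̄ > 0`; smooth functions `(ρ, m)` on
`[0,T]×[a,b]` with `ρ ≥ c_ε > 0` and `u = m/ρ`, satisfying the viscous system
`(r^{n−1}ρ)_t + (r^{n−1}m)_r = ε(r^{n−1}ρ_r)_r`,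
`(r^{n−1}m)_t + (r^{n−1}m²/ρ)_r + r^{n−1}(p_δ(ρ))_r
  = ε(r^{n−1}m)_{rr} − ε((n−1)/r)(r^{n−1}m)_r` on `(0,T)×(a,b)`,
the boundary conditions `ρ_r(t,a) = 0`, `m(t,a) = 0`, `ρ(t,b) = ρ̄`, `m(t,b) = 0`,
and the energy estimate with total energy bound `E₀`. -/
structure ViscousSetup (n : ℕ) (γ T E₀ : ℝ) where
  ε : ℝ
  δ : ℝ
  a : ℝ
  b : ℝ
  ρbar : ℝ
  cε : ℝ
  ρ : ℝ → ℝ → ℝ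
  m : ℝ → ℝ → ℝ
  hn : 2 ≤ n
  hγ : 1 < γ
  hT : 0 < T
  hε : 0 < ε
  hδ : 0 < δ
  ha0 : 0 < a
  ha1 : a < 1
  hb : 1 < b
  hρbar : 0 < ρbar
  hcε : 0 < cε
  smooth_ρ : ContDiff ℝ (⊤ : ℕ∞) (Function.uncurry ρ)
  smooth_m : ContDiff ℝ (⊤ : ℕ∞) (Function.uncurry m)
  pos : ∀ t ∈ Set.Icc 0 T, ∀ r ∈ Set.Icc a b, cε ≤ ρ t r
  continuity_eq : ∀ t ∈ Set.Ioo 0 T, ∀ r ∈ Set.Ioo a b,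
    r ^ (n - 1) * deriv (fun s => ρ s r) t + deriv (fun y => y ^ (n - 1) * m t y) r
      = ε * deriv (fun y => y ^ (n - 1) * deriv (fun z => ρ t z) y) r
  momentum_eq : ∀ t ∈ Set.Ioo 0 T, ∀ r ∈ Set.Ioo a b,
    r ^ (n - 1) * deriv (fun s => m s r) t
      + deriv (fun y => y ^ (n - 1) * (m t y) ^ (2:ℕ) / ρ t y) r
      + r ^ (n - 1) * deriv (fun y =>
          (γ - 1) ^ (2:ℕ) / (4 * γ) * (ρ t y) ^ γ + δ * (ρ t y) ^ (2:ℕ)) r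
      = ε * deriv (fun y => deriv (fun z => z ^ (n - 1) * m t z) y) r
        - ε * ((n - 1 : ℝ) / r) * deriv (fun y => y ^ (n - 1) * m t y) r
  bc_ρr : ∀ t ∈ Set.Icc 0 T, deriv (fun y => ρ t y) a = 0
  bc_ma : ∀ t ∈ Set.Icc 0 T, m t a = 0
  bc_ρb : ∀ t ∈ Set.Icc 0 T, ρ t b = ρbar
  bc_mb : ∀ t ∈ Set.Icc 0 T, m t b = 0
  energy : ∀ t ∈ Set.Icc 0 T,
    (∫ r in Set.Ioo a b,
      ((1/2) * ρ t r * (m t r / ρ t r) ^ (2:ℕ)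
        + hBarDelta γ ((γ - 1) ^ (2:ℕ) / (4 * γ)) δ (ρ t r) ρbar) * r ^ (n - 1))
    + ε * ∫ s in Set.Ioo 0 T, ∫ r in Set.Ioo a b,
        (hDelta'' γ ((γ - 1) ^ (2:ℕ) / (4 * γ)) δ (ρ s r) * (deriv (fun y => ρ s y) r) ^ (2:ℕ)
          + ρ s r * (deriv (fun y => m s y / ρ s y) r) ^ (2:ℕ)
          + (n - 1 : ℝ) * ρ s r * (m s r / ρ s r) ^ (2:ℕ) / r ^ (2:ℕ)) * r ^ (n - 1)
      ≤ E₀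

/-!
Since `l ≤ n - 1`, on `(r, b)` the weight obeys `y^l ≤ r^{l+1-n} y^{n-1}`. Convexity of
`ρ ↦ ρ^γ` gives the pointwise bound `ρ^γ ≤ 8γ/(γ-1) · h̄_δ(ρ, ρ̄) + (2γ)^{γ/(γ-1)} ρ̄^γ` for
`κ = (γ-1)²/(4γ)`. Integrating over `(r, b)`, the relative energy term is controlled by the energy
estimate, kinetic energy and dissipation being nonnegative, and the remaining term by
`ρ̄^γ b^l (b - r) ≤ ρ̄^γ b^{l+1}`.
-/

def powBregman (γ ρ ρbar : ℝ) : ℝ := ρ ^ γ - ρbar ^ γ - γ * ρbar ^ (γ - 1) * (ρ - ρbar)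

lemma powBregman_nonneg {γ ρ ρbar : ℝ} (hγ : 1 ≤ γ) (hρ : 0 ≤ ρ) (hρbar : 0 < ρbar) :
    0 ≤ powBregman γ ρ ρbar := by
  have hs : -1 ≤ ρ / ρbar - 1 := by linarith [div_nonneg hρ hρbar.le]
  have bernoulli := one_add_mul_self_le_rpow_one_add hs hγ
  rw [add_sub_cancel, div_rpow hρ hρbar.le, le_div_iff₀ (rpow_pos_of_pos hρbar γ)] at bernoulli
  have tangent : (1 + γ * (ρ / ρbar - 1)) * ρbar ^ γ
      = ρbar ^ γ + γ * ρbar ^ (γ - 1) * (ρ - ρbar) := by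
    rw [rpow_sub_one hρbar.ne']; field_simp
  unfold powBregman
  linarith

lemma rpow_le_two_mul_powBregman_add {γ ρ ρbar : ℝ} (hγ : 1 < γ) (hρ : 0 ≤ ρ)
    (hρbar : 0 < ρbar) :
    ρ ^ γ ≤ 2 * powBregman γ ρ ρbar + (2 * γ) ^ (γ / (γ - 1)) * ρbar ^ γ := by
  have hγ1 : 0 < γ - 1 := by linarith
  have hC : 0 ≤ (2 * γ) ^ (γ / (γ - 1)) * ρbar ^ γ := by positivity
  -- Either the tangent term `γ ρ̄^{γ-1} ρ` is at most `ρ^γ / 2`,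
  -- or `ρ^{γ-1} < 2γ ρ̄^{γ-1}` and hence `ρ^γ < (2γ)^{γ/(γ-1)} ρ̄^γ`.
  rcases le_or_gt (2 * γ * ρbar ^ (γ - 1)) (ρ ^ (γ - 1)) with hlarge | hsmall
  · have hρ_pow : ρ ^ γ = ρ ^ (γ - 1) * ρ := by
      rw [← rpow_add_one' hρ (by linarith), sub_add_cancel]
    have hρbar_pow : ρbar ^ γ = ρbar ^ (γ - 1) * ρbar := by
      rw [← rpow_add_one' hρbar.le (by linarith), sub_add_cancel]
    have hcross : 2 * γ * ρbar ^ (γ - 1) * ρ ≤ ρ ^ γ :=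
      hρ_pow ▸ mul_le_mul_of_nonneg_right hlarge hρ
    have hρbar_term : 0 ≤ (γ - 1) * ρbar ^ γ := by positivity
    unfold powBregman
    rw [hρbar_pow] at hρbar_term hC ⊢
    nlinarith
  · have hexp : (γ - 1) * (γ / (γ - 1)) = γ := by field_simp
    calc ρ ^ γ = (ρ ^ (γ - 1)) ^ (γ / (γ - 1)) := by rw [← rpow_mul hρ, hexp]
      _ ≤ (2 * γ * ρbar ^ (γ - 1)) ^ (γ / (γ - 1)) := by gcongr
      _ = (2 * γ) ^ (γ / (γ - 1)) * ρbar ^ γ := by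
        rw [mul_rpow (by positivity) (by positivity), ← rpow_mul hρbar.le, hexp]
      _ ≤ _ := by linarith [powBregman_nonneg hγ.le hρ hρbar]

lemma hBarDelta_eq (γ κ δ ρ ρbar : ℝ) :
    hBarDelta γ κ δ ρ ρbar = κ / (γ - 1) * powBregman γ ρ ρbar + δ * (ρ - ρbar) ^ 2 := by
  unfold hBarDelta hDelta hDelta' powBregman
  ring

lemma hBarDelta_nonneg {γ κ δ ρ ρbar : ℝ} (hγ : 1 < γ) (hκ : 0 ≤ κ) (hδ : 0 ≤ δ)
    (hρ : 0 ≤ ρ) (hρbar : 0 < ρbar) : 0 ≤ hBarDelta γ κ δ ρ ρbar := by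
  have hγ1 : 0 < γ - 1 := by linarith
  have := powBregman_nonneg hγ.le hρ hρbar
  rw [hBarDelta_eq]
  positivity

lemma rpow_le_hBarDelta {γ κ δ ρ ρbar : ℝ} (hγ : 1 < γ) (hκ : 0 < κ) (hδ : 0 ≤ δ)
    (hρ : 0 ≤ ρ) (hρbar : 0 < ρbar) :
    ρ ^ γ ≤ 2 * (γ - 1) / κ * hBarDelta γ κ δ ρ ρbar + (2 * γ) ^ (γ / (γ - 1)) * ρbar ^ γ := by
  have hγ1 : 0 < γ - 1 := by linarith
  have hscale : 2 * (γ - 1) / κ * hBarDelta γ κ δ ρ ρbar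
      = 2 * powBregman γ ρ ρbar + 2 * (γ - 1) / κ * (δ * (ρ - ρbar) ^ 2) := by
    rw [hBarDelta_eq]; field_simp
  have : 0 ≤ 2 * (γ - 1) / κ * (δ * (ρ - ρbar) ^ 2) := by positivity
  linarith [rpow_le_two_mul_powBregman_add hγ hρ hρbar]

lemma pow_le_rpow_mul_pow {r y : ℝ} {l n : ℕ} (hr : 0 < r) (hry : r ≤ y) (hln : l + 1 ≤ n) :
    y ^ l ≤ r ^ ((l : ℝ) + 1 - n) * y ^ (n - 1) := by
  have hy : 0 < y := hr.trans_le hry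
  have hexp : (l : ℝ) + 1 - n ≤ 0 := by
    have : ((l + 1 : ℕ) : ℝ) ≤ n := by exact_mod_cast hln
    push_cast at this; linarith
  have hsplit : y ^ l = y ^ ((l : ℝ) + 1 - n) * y ^ (n - 1) := by
    rw [← rpow_natCast y (n - 1), ← rpow_add hy, ← rpow_natCast, Nat.cast_sub (by omega)]
    congr 1; push_cast; ring
  rw [hsplit]
  exact mul_le_mul_of_nonneg_right (rpow_le_rpow_of_nonpos hr hry hexp) (by positivity)

lemma setIntegral_Ioo_le_mul_add {f g : ℝ → ℝ} {r b A c : ℝ} (hrb : r ≤ b)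
    (hf : IntegrableOn f (Ioo r b)) (hg : IntegrableOn g (Ioo r b))
    (h : ∀ y ∈ Ioo r b, f y ≤ A * g y + c) :
    ∫ y in Ioo r b, f y ≤ A * (∫ y in Ioo r b, g y) + c * (b - r) := by
  have hc : IntegrableOn (fun _ => c) (Ioo r b) := integrableOn_const measure_Ioo_lt_top.ne
  calc ∫ y in Ioo r b, f y ≤ ∫ y in Ioo r b, (A * g y + c) :=
        setIntegral_mono_on hf ((hg.const_mul A).add hc) measurableSet_Ioo h
    _ = A * (∫ y in Ioo r b, g y) + c * (b - r) := by
        rw [integral_add (hg.const_mul A) hc, integral_const_mul, setIntegral_const,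
          Real.volume_real_Ioo_of_le hrb, smul_eq_mul, mul_comm c]

namespace ViscousSetup

variable {n : ℕ} {γ T E₀ : ℝ} (S : ViscousSetup n γ T E₀) {t r y : ℝ}

def hBar (t y : ℝ) : ℝ := hBarDelta γ ((γ - 1) ^ (2:ℕ) / (4 * γ)) S.δ (S.ρ t y) S.ρbar

def dissipation : ℝ :=
  ∫ s in Ioo 0 T, ∫ r in Ioo S.a S.b,
    (hDelta'' γ ((γ - 1) ^ (2:ℕ) / (4 * γ)) S.δ (S.ρ s r) * (deriv (fun y => S.ρ s y) r) ^ (2:ℕ)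
      + S.ρ s r * (deriv (fun y => S.m s y / S.ρ s y) r) ^ (2:ℕ)
      + (n - 1 : ℝ) * S.ρ s r * (S.m s r / S.ρ s r) ^ (2:ℕ) / r ^ (2:ℕ)) * r ^ (n - 1)

lemma ρ_pos (ht : t ∈ Icc 0 T) (hy : y ∈ Icc S.a S.b) : 0 < S.ρ t y :=
  S.hcε.trans_le (S.pos t ht y hy)

lemma continuous_ρ (t : ℝ) : Continuous (S.ρ t) :=
  S.smooth_ρ.continuous.comp (Continuous.prodMk_right t)

lemma continuous_m (t : ℝ) : Continuous (S.m t) :=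
  S.smooth_m.continuous.comp (Continuous.prodMk_right t)

lemma continuous_rpow_ρ (t : ℝ) : Continuous fun y => S.ρ t y ^ γ :=
  (S.continuous_ρ t).rpow_const fun _ => Or.inr (by linarith [S.hγ])

lemma continuous_hBar (t : ℝ) : Continuous (S.hBar t) := by
  have := S.continuous_rpow_ρ t
  have := S.continuous_ρ t
  unfold hBar hBarDelta hDelta hDelta'
  fun_prop

lemma continuous_hBar_mul_pow (t : ℝ) (k : ℕ) : Continuous fun y => S.hBar t y * y ^ k :=
  (S.continuous_hBar t).mul (continuous_pow k)

lemma hBar_nonneg (ht : t ∈ Icc 0 T) (hy : y ∈ Icc S.a S.b) : 0 ≤ S.hBar t y := by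
  have hγ : 0 < γ := by linarith [S.hγ]
  exact hBarDelta_nonneg S.hγ (by positivity) S.hδ.le (S.ρ_pos ht hy).le S.hρbar

lemma dissipation_nonneg : 0 ≤ S.dissipation := by
  have hγ : 0 < γ := by linarith [S.hγ]
  have hn : (0 : ℝ) ≤ n - 1 := by
    have : (2 : ℝ) ≤ n := by exact_mod_cast S.hn
    linarith
  refine setIntegral_nonneg measurableSet_Ioo fun s hs => ?_
  refine setIntegral_nonneg measurableSet_Ioo fun y hy => ?_
  have hρ := S.ρ_pos (Ioo_subset_Icc_self hs) (Ioo_subset_Icc_self hy)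
  have hy0 : 0 < y := S.ha0.trans hy.1
  unfold hDelta''
  have := S.hδ
  positivity

lemma integral_kinetic_add_hBar_le (ht : t ∈ Icc 0 T) :
    ∫ y in Ioo S.a S.b,
      ((1/2) * S.ρ t y * (S.m t y / S.ρ t y) ^ (2:ℕ) + S.hBar t y) * y ^ (n - 1) ≤ E₀ :=
  (le_add_of_nonneg_right (mul_nonneg S.hε.le S.dissipation_nonneg)).trans (S.energy t ht)

lemma setIntegral_hBar_le (ht : t ∈ Icc 0 T) (hr : S.a ≤ r) :
    ∫ y in Ioo r S.b, S.hBar t y * y ^ (n - 1) ≤ E₀ := by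
  have hw := S.continuous_hBar_mul_pow t (n - 1)
  have hw_nonneg : ∀ y ∈ Ioo S.a S.b, 0 ≤ S.hBar t y * y ^ (n - 1) := fun y hy =>
    mul_nonneg (S.hBar_nonneg ht (Ioo_subset_Icc_self hy)) (pow_nonneg (S.ha0.trans hy.1).le _)
  have hρ_ne : ∀ y ∈ Icc S.a S.b, S.ρ t y ≠ 0 := fun y hy => (S.ρ_pos ht hy).ne'
  have hkin : ContinuousOn (fun y =>
      ((1/2) * S.ρ t y * (S.m t y / S.ρ t y) ^ (2:ℕ) + S.hBar t y) * y ^ (n - 1))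
      (Icc S.a S.b) := by
    have hu := (S.continuous_m t).continuousOn.div (S.continuous_ρ t).continuousOn hρ_ne
    exact (((continuousOn_const.mul (S.continuous_ρ t).continuousOn).mul (hu.pow 2)).add
      (S.continuous_hBar t).continuousOn).mul (continuous_pow _).continuousOn
  calc ∫ y in Ioo r S.b, S.hBar t y * y ^ (n - 1)
      ≤ ∫ y in Ioo S.a S.b, S.hBar t y * y ^ (n - 1) :=
        setIntegral_mono_set (hw.integrableOn_Icc.mono_set Ioo_subset_Icc_self)
          (ae_restrict_of_forall_mem measurableSet_Ioo hw_nonneg)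
          (Ioo_subset_Ioo_left hr).eventuallyLE
    _ ≤ ∫ y in Ioo S.a S.b,
          ((1/2) * S.ρ t y * (S.m t y / S.ρ t y) ^ (2:ℕ) + S.hBar t y) * y ^ (n - 1) := by
        refine setIntegral_mono_on (hw.integrableOn_Icc.mono_set Ioo_subset_Icc_self)
          (hkin.integrableOn_Icc.mono_set Ioo_subset_Icc_self) measurableSet_Ioo fun y hy => ?_
        have hρ := S.ρ_pos ht (Ioo_subset_Icc_self hy)
        have hy0 : 0 < y := S.ha0.trans hy.1
        gcongr
        exact le_add_of_nonneg_left (by positivity)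
    _ ≤ E₀ := S.integral_kinetic_add_hBar_le ht

lemma rpow_mul_pow_le (ht : t ∈ Icc 0 T) (hr : S.a ≤ r) {l : ℕ} (hl : l + 1 ≤ n)
    (hy : y ∈ Ioo r S.b) :
    S.ρ t y ^ γ * y ^ l ≤ 8 * γ / (γ - 1) * r ^ ((l : ℝ) + 1 - n) * (S.hBar t y * y ^ (n - 1))
      + (2 * γ) ^ (γ / (γ - 1)) * S.ρbar ^ γ * S.b ^ l := by
  have hγ : 0 < γ := by linarith [S.hγ]
  have hγ1 : 0 < γ - 1 := by linarith [S.hγ]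
  have hρbar := S.hρbar
  have hr0 : 0 < r := S.ha0.trans_le hr
  have hy0 : 0 < y := hr0.trans hy.1
  have hyI : y ∈ Icc S.a S.b := ⟨hr.trans hy.1.le, hy.2.le⟩
  have hρ := rpow_le_hBarDelta S.hγ (κ := (γ - 1) ^ (2:ℕ) / (4 * γ)) (by positivity) S.hδ.le
    (S.ρ_pos ht hyI).le S.hρbar
  rw [show 2 * (γ - 1) / ((γ - 1) ^ (2:ℕ) / (4 * γ)) = 8 * γ / (γ - 1) by field_simp; ring] at hρ
  have hhBar := S.hBar_nonneg ht hyI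
  calc S.ρ t y ^ γ * y ^ l
      ≤ (8 * γ / (γ - 1) * S.hBar t y + (2 * γ) ^ (γ / (γ - 1)) * S.ρbar ^ γ) * y ^ l :=
        mul_le_mul_of_nonneg_right hρ (by positivity)
    _ = 8 * γ / (γ - 1) * S.hBar t y * y ^ l + (2 * γ) ^ (γ / (γ - 1)) * S.ρbar ^ γ * y ^ l := by
        ring
    _ ≤ 8 * γ / (γ - 1) * S.hBar t y * (r ^ ((l : ℝ) + 1 - n) * y ^ (n - 1))
          + (2 * γ) ^ (γ / (γ - 1)) * S.ρbar ^ γ * S.b ^ l :=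
        add_le_add
          (mul_le_mul_of_nonneg_left (pow_le_rpow_mul_pow hr0 hy.1.le hl)
            (mul_nonneg (by positivity) hhBar))
          (mul_le_mul_of_nonneg_left (pow_le_pow_left₀ hy0.le hy.2.le l) (by positivity))
    _ = _ := by ring

lemma E₀_nonneg (S : ViscousSetup n γ T E₀) (ht : t ∈ Icc 0 T) : 0 ≤ E₀ := by
  refine (setIntegral_nonneg measurableSet_Ioo fun y hy => ?_).trans
    (S.setIntegral_hBar_le ht le_rfl)
  exact mul_nonneg (S.hBar_nonneg ht (Ioo_subset_Icc_self hy)) (pow_nonneg (S.ha0.trans hy.1).le _)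

lemma setIntegral_rpow_mul_pow_le (ht : t ∈ Icc 0 T) (hr : r ∈ Ico S.a S.b) {l : ℕ}
    (hl : l + 1 ≤ n) :
    ∫ y in Ioo r S.b, S.ρ t y ^ γ * y ^ l
      ≤ 8 * γ / (γ - 1) * r ^ ((l : ℝ) + 1 - n) * E₀
        + (2 * γ) ^ (γ / (γ - 1)) * S.ρbar ^ γ * S.b ^ (l + 1) := by
  have hγ : 0 < γ := by linarith [S.hγ]
  have hγ1 : 0 < γ - 1 := by linarith [S.hγ]
  have hρbar := S.hρbar
  have hr0 : 0 < r := S.ha0.trans_le hr.1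
  have hb : 0 < S.b := hr0.trans hr.2
  have hρ_int : IntegrableOn (fun y => S.ρ t y ^ γ * y ^ l) (Ioo r S.b) :=
    ((S.continuous_rpow_ρ t).mul (continuous_pow l)).integrableOn_Icc.mono_set Ioo_subset_Icc_self
  have hhBar_int : IntegrableOn (fun y => S.hBar t y * y ^ (n - 1)) (Ioo r S.b) :=
    (S.continuous_hBar_mul_pow t (n - 1)).integrableOn_Icc.mono_set Ioo_subset_Icc_self
  calc ∫ y in Ioo r S.b, S.ρ t y ^ γ * y ^ l
      ≤ 8 * γ / (γ - 1) * r ^ ((l : ℝ) + 1 - n) * (∫ y in Ioo r S.b, S.hBar t y * y ^ (n - 1))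
        + (2 * γ) ^ (γ / (γ - 1)) * S.ρbar ^ γ * S.b ^ l * (S.b - r) :=
        setIntegral_Ioo_le_mul_add hr.2.le hρ_int hhBar_int fun y hy =>
          S.rpow_mul_pow_le ht hr.1 hl hy
    _ ≤ 8 * γ / (γ - 1) * r ^ ((l : ℝ) + 1 - n) * E₀
        + (2 * γ) ^ (γ / (γ - 1)) * S.ρbar ^ γ * S.b ^ l * S.b := by
        gcongr
        · exact S.setIntegral_hBar_le ht hr.1
        · linarith
    _ = _ := by ring

end ViscousSetup

theorem rho_gamma_weighted_bound_general (n : ℕ) (γ : ℝ) (hγ : 1 < γ) :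
    ∃ M : ℝ, 0 < M ∧ ∀ T E₀ : ℝ, ∀ S : ViscousSetup n γ T E₀,
      ∀ l : ℕ, l ≤ n - 1 → ∀ r ∈ Set.Ico S.a S.b, ∀ t ∈ Set.Icc 0 T,
        (∫ y in Set.Ioo r S.b, (S.ρ t y) ^ γ * y ^ l)
          ≤ M * (r ^ ((l : ℝ) + 1 - n) * E₀ + S.ρbar ^ γ * S.b ^ (l + 1)) := by
  have hγ1 : 0 < γ - 1 := by linarith
  have hA : 0 < 8 * γ / (γ - 1) := by positivity
  have hC : 0 < (2 * γ) ^ (γ / (γ - 1)) := by positivity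
  refine ⟨8 * γ / (γ - 1) + (2 * γ) ^ (γ / (γ - 1)), by positivity,
    fun T E₀ S l hl r hr t ht => ?_⟩
  have hρbar := S.hρbar
  have hE₀ := S.E₀_nonneg ht
  have hr0 : 0 < r := S.ha0.trans_le hr.1
  have hX : 0 ≤ r ^ ((l : ℝ) + 1 - n) * E₀ := by positivity
  have hY : 0 ≤ S.ρbar ^ γ * S.b ^ (l + 1) := by
    have : 0 < S.b := hr0.trans hr.2
    positivity
  have hbound := S.setIntegral_rpow_mul_pow_le ht hr (by have := S.hn; omega : l + 1 ≤ n)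
  nlinarith [mul_nonneg hA.le hY, mul_nonneg hC.le hX]

/-- under the Viscous Setup there is `M > 0` depending only on `γ` and `n`
(independent of `ε, δ, a, b, ρ̄, T, E₀`) such that for every `0 ≤ l ≤ n−1` and `r ∈ [a,b)`,
`sup_{t∈[0,T]} ∫_r^b ρ(t,y)^γ y^l dy ≤ M(r^{l+1−n} E₀ + ρ̄^γ b^{l+1})`. -/
theorem rho_gamma_weighted_bound (n : ℕ) (hn : 2 ≤ n) (γ : ℝ) (hγ : 1 < γ) :
    ∃ M : ℝ, 0 < M ∧ ∀ T E₀ : ℝ, ∀ S : ViscousSetup n γ T E₀,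
      ∀ l : ℕ, l ≤ n - 1 → ∀ r ∈ Set.Ico S.a S.b, ∀ t ∈ Set.Icc 0 T,
        (∫ y in Set.Ioo r S.b, (S.ρ t y) ^ γ * y ^ l)
          ≤ M * (r ^ ((l : ℝ) + 1 - n) * E₀ + S.ρbar ^ γ * S.b ^ (l + 1)) :=
  rho_gamma_weighted_bound_general n γ hγ
end
end

section
/- Under the Viscous Setup, suppose additionally that ω ∈ C_c^∞(ℝ) with support contained in [0,b), and let φ : (0,∞) → ℝ be twice continuously differentiable. Then, writing φ for φ(ρ(t,r)) and φ_r = φ'(ρ)ρ_r, the following identity holds: ε∫₀^T∫_a^b φ''(ρ)ρ_r² ω(r)² r^{n−1} dr dt = −∫_a^b [φ(ρ(T,r)) − φ(ρ(0,r))] ω(r)² r^{n−1} dr + ∫₀^T∫_a^b (φ(ρ) − ρφ'(ρ)) u_r ω(r)² r^{n−1} dr dt + 2∫₀^T∫_a^b φ(ρ) u ω(r) ω_r(r) r^{n−1} dr dt + ∫₀^T∫_a^b ((n−1)/r)(φ(ρ) − ρφ'(ρ)) u ω(r)² r^{n−1} dr dt − 2ε∫₀^T∫_a^b φ'(ρ)ρ_r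 ω(r) ω_r(r) r^{n−1} dr dt. -/
open MeasureTheory Real Set

noncomputable section

/-!
Testing the continuity equation with `φ'(ρ) ω²` and writing `m = ρ u` gives, at interior points,
the balance law
`ε φ''(ρ) ρ_r² ω² r^(n-1) + ∂_t φ(ρ) ω² r^(n-1) - (φ - ρ φ') u_r ω² r^(n-1) - 2 φ u ω ω_r r^(n-1)
  - ((n-1)/r) (φ - ρ φ') u ω² r^(n-1) + 2 ε φ' ρ_r ω ω_r r^(n-1)
  = ∂_r [(ε φ'(ρ) ρ_r - φ(ρ) u) ω² r^(n-1)]`.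
The flux in brackets vanishes at `r = a`, where `ρ_r = m = 0`, and at `r = b`, where `ω = 0`
because `supp ω ⊆ [0, b)`; so the right side integrates to zero in `r`. After Fubini, the
time-derivative term integrates to the difference of `φ(ρ)` at `t = T` and `t = 0`. All integrands
are continuous on the compact rectangle `[0, T] × [a, b]`, where `ρ ≥ c_ε > 0`, which justifies
splitting and swapping the integrals.
-/

open Function

theorem setIntegral_Ioo_eq_sub_of_hasDerivAt {f f' : ℝ → ℝ} {a b : ℝ} (hab : a ≤ b)
    (hcont : ContinuousOn f (Icc a b)) (hderiv : ∀ x ∈ Ioo a b, HasDerivAt f (f' x) x)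
    (hint : IntegrableOn f' (Ioo a b)) :
    ∫ x in Ioo a b, f' x = f b - f a := by
  rw [← integral_Ioc_eq_integral_Ioo, ← intervalIntegral.integral_of_le hab]
  exact intervalIntegral.integral_eq_sub_of_hasDerivAt_of_le hab hcont hderiv
    ((intervalIntegrable_iff_integrableOn_Ioo_of_le hab).2 hint)

theorem hasDerivAt_pow_sub_one {n : ℕ} {r : ℝ} (hn : 1 ≤ n) (hr : r ≠ 0) :
    HasDerivAt (fun y : ℝ => y ^ (n - 1)) ((n - 1 : ℝ) / r * r ^ (n - 1)) r := by
  obtain ⟨k, rfl⟩ := Nat.exists_eq_add_of_le' hn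
  refine (hasDerivAt_pow k r).congr_deriv ?_
  rcases k with _ | k
  · simp
  · push_cast
    field_simp
    ring

def renormalizedFlux (n : ℕ) (ε : ℝ) (φ ω ρ m : ℝ → ℝ) (r : ℝ) : ℝ :=
  (ε * deriv φ (ρ r) * deriv ρ r - φ (ρ r) * (m r / ρ r)) * ω r ^ 2 * r ^ (n - 1)

theorem hasDerivAt_renormalizedFlux {n : ℕ} {ε r ρt : ℝ} {φ ω ρ m : ℝ → ℝ} (hn : 1 ≤ n)
    (hr : r ≠ 0) (hρr : ρ r ≠ 0) (hρ : DifferentiableAt ℝ ρ r)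
    (hρ' : DifferentiableAt ℝ (deriv ρ) r) (hm : DifferentiableAt ℝ m r)
    (hω : DifferentiableAt ℝ ω r) (hφ : DifferentiableAt ℝ φ (ρ r))
    (hφ' : DifferentiableAt ℝ (deriv φ) (ρ r))
    (hpde : r ^ (n - 1) * ρt + deriv (fun y => y ^ (n - 1) * m y) r
      = ε * deriv (fun y => y ^ (n - 1) * deriv ρ y) r) :
    HasDerivAt (renormalizedFlux n ε φ ω ρ m)
      (ε * (deriv (deriv φ) (ρ r) * deriv ρ r ^ 2 * ω r ^ 2 * r ^ (n - 1))
        + deriv φ (ρ r) * ρt * ω r ^ 2 * r ^ (n - 1)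
        - (φ (ρ r) - ρ r * deriv φ (ρ r)) * deriv (fun y => m y / ρ y) r * ω r ^ 2 * r ^ (n - 1)
        - 2 * (φ (ρ r) * (m r / ρ r) * ω r * deriv ω r * r ^ (n - 1))
        - ((n - 1 : ℝ) / r) * (φ (ρ r) - ρ r * deriv φ (ρ r)) * (m r / ρ r) * ω r ^ 2
            * r ^ (n - 1)
        + 2 * ε * (deriv φ (ρ r) * deriv ρ r * ω r * deriv ω r * r ^ (n - 1))) r := by
  have hw := hasDerivAt_pow_sub_one hn hr
  have hu := hm.hasDerivAt.fun_div hρ.hasDerivAt hρr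
  rw [(hw.fun_mul hm.hasDerivAt).deriv, (hw.fun_mul hρ'.hasDerivAt).deriv] at hpde
  rw [hu.deriv]
  have h := (((((hφ'.hasDerivAt.comp r hρ.hasDerivAt).const_mul ε).fun_mul hρ'.hasDerivAt).fun_sub
    ((hφ.hasDerivAt.comp r hρ.hasDerivAt).fun_mul hu)).fun_mul (hω.hasDerivAt.fun_pow 2)).fun_mul hw
  refine h.congr_deriv ?_
  simp only [Function.comp_apply]
  field_simp at hpde ⊢
  -- the continuity equation, tested against `φ'(ρ) ω²` (times `ρ²` from clearing denominators)
  linear_combination (-(deriv φ (ρ r) * ω r ^ 2 * ρ r ^ 2)) * hpde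

section PartialDerivatives

variable {f g : ℝ → ℝ → ℝ}

theorem differentiableAt_apply_of_contDiff_uncurry (hf : ContDiff ℝ (⊤ : ℕ∞) (uncurry f))
    (t r : ℝ) : DifferentiableAt ℝ (fun y => f t y) r :=
  (hf.comp (contDiff_prodMk_right t)).differentiable (by simp) r

theorem deriv_snd_eq_fderiv {t r : ℝ} (hf : DifferentiableAt ℝ (uncurry f) (t, r)) :
    deriv (fun y => f t y) r = fderiv ℝ (uncurry f) (t, r) (0, 1) :=
  (hf.hasFDerivAt.comp_hasDerivAt r ((hasDerivAt_const r t).prodMk (hasDerivAt_id r))).deriv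

theorem contDiff_uncurry_deriv_snd (hf : ContDiff ℝ (⊤ : ℕ∞) (uncurry f)) :
    ContDiff ℝ (⊤ : ℕ∞) (uncurry fun t r => deriv (fun y => f t y) r) := by
  have hfd : ContDiff ℝ (⊤ : ℕ∞) fun p => fderiv ℝ (uncurry f) p (0, 1) :=
    (hf.fderiv_right (by exact_mod_cast le_top)).clm_apply contDiff_const
  convert hfd using 1
  exact funext fun p => deriv_snd_eq_fderiv (hf.differentiable (by simp) p)

theorem contDiff_uncurry_deriv_fst (hf : ContDiff ℝ (⊤ : ℕ∞) (uncurry f)) :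
    ContDiff ℝ (⊤ : ℕ∞) (uncurry fun t r => deriv (fun s => f s r) t) :=
  have hswap : ContDiff ℝ (⊤ : ℕ∞) (Prod.swap : ℝ × ℝ → ℝ × ℝ) := contDiff_snd.prodMk contDiff_fst
  (contDiff_uncurry_deriv_snd (f := fun r t => f t r) (hf.comp hswap)).comp hswap

theorem continuousOn_deriv_div_snd {s : Set (ℝ × ℝ)} (hf : ContDiff ℝ (⊤ : ℕ∞) (uncurry f))
    (hg : ContDiff ℝ (⊤ : ℕ∞) (uncurry g)) (hg0 : ∀ p ∈ s, g p.1 p.2 ≠ 0) :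
    ContinuousOn (fun p : ℝ × ℝ => deriv (fun y => f p.1 y / g p.1 y) p.2) s := by
  have := hf.continuous
  have := hg.continuous
  have := (contDiff_uncurry_deriv_snd hf).continuous
  have := (contDiff_uncurry_deriv_snd hg).continuous
  have hg20 : ∀ p ∈ s, g p.1 p.2 ^ 2 ≠ 0 := fun p hp => pow_ne_zero 2 (hg0 p hp)
  refine ContinuousOn.congr (f := fun p => (deriv (fun y => f p.1 y) p.2 * g p.1 p.2
    - f p.1 p.2 * deriv (fun y => g p.1 y) p.2) / g p.1 p.2 ^ 2)
    (by fun_prop (disch := assumption)) fun p hp => ?_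
  exact ((differentiableAt_apply_of_contDiff_uncurry hf p.1 p.2).hasDerivAt.fun_div
    (differentiableAt_apply_of_contDiff_uncurry hg p.1 p.2).hasDerivAt (hg0 p hp)).deriv

end PartialDerivatives

section Rectangle

variable {t₀ t₁ a b : ℝ} {f g : ℝ → ℝ → ℝ}

theorem ContinuousOn.integrableOn_Ioo_slice
    (hf : ContinuousOn (fun p : ℝ × ℝ => f p.1 p.2) (Icc t₀ t₁ ×ˢ Icc a b)) {t : ℝ}
    (ht : t ∈ Icc t₀ t₁) : IntegrableOn (f t) (Ioo a b) :=
  ((hf.uncurry_left (f := f) t ht).integrableOn_Icc).mono_set Ioo_subset_Icc_self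

theorem ContinuousOn.integrable_prod_Ioo
    (hf : ContinuousOn (fun p : ℝ × ℝ => f p.1 p.2) (Icc t₀ t₁ ×ˢ Icc a b)) :
    Integrable (uncurry f) ((volume.restrict (Ioo t₀ t₁)).prod (volume.restrict (Ioo a b))) := by
  rw [Measure.prod_restrict, ← Measure.volume_eq_prod]
  exact (hf.integrableOn_compact (isCompact_Icc.prod isCompact_Icc)).mono_set
    (prod_mono Ioo_subset_Icc_self Ioo_subset_Icc_self)

theorem ContinuousOn.integrable_integral_Ioo
    (hf : ContinuousOn (fun p : ℝ × ℝ => f p.1 p.2) (Icc t₀ t₁ ×ˢ Icc a b)) :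
    Integrable (fun t => ∫ r in Ioo a b, f t r) (volume.restrict (Ioo t₀ t₁)) :=
  hf.integrable_prod_Ioo.integral_prod_left

theorem integral_integral_Ioo_swap
    (hf : ContinuousOn (fun p : ℝ × ℝ => f p.1 p.2) (Icc t₀ t₁ ×ˢ Icc a b)) :
    ∫ t in Ioo t₀ t₁, ∫ r in Ioo a b, f t r = ∫ r in Ioo a b, ∫ t in Ioo t₀ t₁, f t r :=
  integral_integral_swap hf.integrable_prod_Ioo

theorem integral_integral_Ioo_add
    (hf : ContinuousOn (fun p : ℝ × ℝ => f p.1 p.2) (Icc t₀ t₁ ×ˢ Icc a b))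
    (hg : ContinuousOn (fun p : ℝ × ℝ => g p.1 p.2) (Icc t₀ t₁ ×ˢ Icc a b)) :
    ∫ t in Ioo t₀ t₁, ∫ r in Ioo a b, (f t r + g t r)
      = (∫ t in Ioo t₀ t₁, ∫ r in Ioo a b, f t r) + ∫ t in Ioo t₀ t₁, ∫ r in Ioo a b, g t r := by
  rw [← integral_add hf.integrable_integral_Ioo hg.integrable_integral_Ioo]
  refine setIntegral_congr_fun measurableSet_Ioo fun t ht => ?_
  exact integral_add (hf.integrableOn_Ioo_slice (Ioo_subset_Icc_self ht))
    (hg.integrableOn_Ioo_slice (Ioo_subset_Icc_self ht))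

theorem integral_integral_Ioo_sub
    (hf : ContinuousOn (fun p : ℝ × ℝ => f p.1 p.2) (Icc t₀ t₁ ×ˢ Icc a b))
    (hg : ContinuousOn (fun p : ℝ × ℝ => g p.1 p.2) (Icc t₀ t₁ ×ˢ Icc a b)) :
    ∫ t in Ioo t₀ t₁, ∫ r in Ioo a b, (f t r - g t r)
      = (∫ t in Ioo t₀ t₁, ∫ r in Ioo a b, f t r) - ∫ t in Ioo t₀ t₁, ∫ r in Ioo a b, g t r := by
  rw [← integral_sub hf.integrable_integral_Ioo hg.integrable_integral_Ioo]
  refine setIntegral_congr_fun measurableSet_Ioo fun t ht => ?_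
  exact integral_sub (hf.integrableOn_Ioo_slice (Ioo_subset_Icc_self ht))
    (hg.integrableOn_Ioo_slice (Ioo_subset_Icc_self ht))

theorem integral_integral_Ioo_eq_integral_sub_of_hasDerivAt_fst {G : ℝ → ℝ → ℝ}
    (ht : t₀ ≤ t₁) (hG : ∀ t ∈ Icc t₀ t₁, ∀ r ∈ Icc a b, HasDerivAt (fun s => G s r) (f t r) t)
    (hf : ContinuousOn (fun p : ℝ × ℝ => f p.1 p.2) (Icc t₀ t₁ ×ˢ Icc a b)) :
    ∫ t in Ioo t₀ t₁, ∫ r in Ioo a b, f t r = ∫ r in Ioo a b, (G t₁ r - G t₀ r) := by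
  rw [integral_integral_Ioo_swap hf]
  refine setIntegral_congr_fun measurableSet_Ioo fun r hr => ?_
  have hr' := Ioo_subset_Icc_self hr
  refine setIntegral_Ioo_eq_sub_of_hasDerivAt ht
    (fun t ht => (hG t ht r hr').continuousAt.continuousWithinAt)
    (fun t ht => hG t (Ioo_subset_Icc_self ht) r hr') ?_
  exact ((hf.uncurry_right (f := f) r hr').integrableOn_Icc).mono_set Ioo_subset_Icc_self

theorem integral_integral_Ioo_eq_zero_of_hasDerivAt_snd {Φ : ℝ → ℝ → ℝ} (hab : a ≤ b)
    (hf : ContinuousOn (fun p : ℝ × ℝ => f p.1 p.2) (Icc t₀ t₁ ×ˢ Icc a b))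
    (hΦ : ContinuousOn (fun p : ℝ × ℝ => Φ p.1 p.2) (Icc t₀ t₁ ×ˢ Icc a b))
    (hderiv : ∀ t ∈ Ioo t₀ t₁, ∀ r ∈ Ioo a b, HasDerivAt (Φ t) (f t r) r)
    (hbdry : ∀ t ∈ Ioo t₀ t₁, Φ t a = Φ t b) :
    ∫ t in Ioo t₀ t₁, ∫ r in Ioo a b, f t r = 0 := by
  refine setIntegral_eq_zero_of_forall_eq_zero fun t ht => ?_
  have ht' := Ioo_subset_Icc_self ht
  rw [setIntegral_Ioo_eq_sub_of_hasDerivAt hab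
    (hΦ.uncurry_left (f := Φ) t ht') (hderiv t ht)
    (hf.integrableOn_Ioo_slice ht'), hbdry t ht, sub_self]

theorem integral_integral_Ioo_eq_of_balance_eq_zero {c : ℝ} {A B C D E F : ℝ → ℝ → ℝ}
    (hA : ContinuousOn (fun p : ℝ × ℝ => A p.1 p.2) (Icc t₀ t₁ ×ˢ Icc a b))
    (hB : ContinuousOn (fun p : ℝ × ℝ => B p.1 p.2) (Icc t₀ t₁ ×ˢ Icc a b))
    (hC : ContinuousOn (fun p : ℝ × ℝ => C p.1 p.2) (Icc t₀ t₁ ×ˢ Icc a b))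
    (hD : ContinuousOn (fun p : ℝ × ℝ => D p.1 p.2) (Icc t₀ t₁ ×ˢ Icc a b))
    (hE : ContinuousOn (fun p : ℝ × ℝ => E p.1 p.2) (Icc t₀ t₁ ×ˢ Icc a b))
    (hF : ContinuousOn (fun p : ℝ × ℝ => F p.1 p.2) (Icc t₀ t₁ ×ˢ Icc a b))
    (hbal : ∫ t in Ioo t₀ t₁, ∫ r in Ioo a b,
      (c * A t r + B t r - C t r - 2 * D t r - E t r + 2 * c * F t r) = 0) :
    c * ∫ t in Ioo t₀ t₁, ∫ r in Ioo a b, A t r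
      = -(∫ t in Ioo t₀ t₁, ∫ r in Ioo a b, B t r) + (∫ t in Ioo t₀ t₁, ∫ r in Ioo a b, C t r)
        + 2 * (∫ t in Ioo t₀ t₁, ∫ r in Ioo a b, D t r)
        + (∫ t in Ioo t₀ t₁, ∫ r in Ioo a b, E t r)
        - 2 * c * (∫ t in Ioo t₀ t₁, ∫ r in Ioo a b, F t r) := by
  rw [integral_integral_Ioo_add (by fun_prop) (by fun_prop),
    integral_integral_Ioo_sub (by fun_prop) (by fun_prop),
    integral_integral_Ioo_sub (by fun_prop) (by fun_prop),
    integral_integral_Ioo_sub (by fun_prop) (by fun_prop),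
    integral_integral_Ioo_add (by fun_prop) hB] at hbal
  simp only [integral_const_mul] at hbal
  linarith

end Rectangle

theorem integral_integral_Ioo_deriv_comp_fst {ρ : ℝ → ℝ → ℝ} {φ ω : ℝ → ℝ} {s : Set ℝ} {k : ℕ}
    {t₀ t₁ a b : ℝ} (ht : t₀ ≤ t₁) (hρ : ContDiff ℝ (⊤ : ℕ∞) (uncurry ρ))
    (hρK : MapsTo (fun p : ℝ × ℝ => ρ p.1 p.2) (Icc t₀ t₁ ×ˢ Icc a b) s)
    (hφ : ContDiffOn ℝ 1 φ s) (hs : IsOpen s) (hω : Continuous ω) :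
    ∫ t in Ioo t₀ t₁, ∫ r in Ioo a b, deriv φ (ρ t r) * deriv (fun s => ρ s r) t * ω r ^ 2 * r ^ k
      = ∫ r in Ioo a b, (φ (ρ t₁ r) - φ (ρ t₀ r)) * ω r ^ 2 * r ^ k := by
  have := hφ.continuousOn_deriv_of_isOpen hs le_rfl
  have := hρ.continuous
  have : ContinuousOn (fun p : ℝ × ℝ => deriv (fun s => ρ s p.2) p.1) (Icc t₀ t₁ ×ˢ Icc a b) :=
    (contDiff_uncurry_deriv_fst hρ).continuous.continuousOn
  have hρd : Differentiable ℝ (uncurry ρ) := hρ.differentiable (by simp)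
  rw [integral_integral_Ioo_eq_integral_sub_of_hasDerivAt_fst
    (G := fun t r => φ (ρ t r) * ω r ^ 2 * r ^ k) ht (fun t ht r hr => ?_)
    (by fun_prop (disch := assumption))]
  · simp only [sub_mul]
  · have hφd := (hφ.contDiffAt (hs.mem_nhds (hρK (x := (t, r)) ⟨ht, hr⟩))).differentiableAt
      one_ne_zero
    have hρs : DifferentiableAt ℝ (fun s => ρ s r) t := by fun_prop
    exact ((hφd.hasDerivAt.comp t hρs.hasDerivAt).mul_const _).mul_const _

theorem continuity_renormalized_identity_general
    (n : ℕ) (hn : 2 ≤ n)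
    (T ε a b cε : ℝ) (hT : 0 < T)
    (ha0 : 0 < a) (ha1 : a < 1) (hb : 1 < b) (hcε : 0 < cε)
    (ρ m : ℝ → ℝ → ℝ)
    (hρ_smooth : ContDiff ℝ (⊤ : ℕ∞) (Function.uncurry ρ))
    (hm_smooth : ContDiff ℝ (⊤ : ℕ∞) (Function.uncurry m))
    (hpos : ∀ t ∈ Set.Icc 0 T, ∀ r ∈ Set.Icc a b, cε ≤ ρ t r)
    (continuity_eq : ∀ t ∈ Set.Ioo 0 T, ∀ r ∈ Set.Ioo a b,
      r ^ (n - 1) * deriv (fun s => ρ s r) t + deriv (fun y => y ^ (n - 1) * m t y) r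
        = ε * deriv (fun y => y ^ (n - 1) * deriv (fun z => ρ t z) y) r)
    (bc_ρr : ∀ t ∈ Set.Icc 0 T, deriv (fun y => ρ t y) a = 0)
    (bc_ma : ∀ t ∈ Set.Icc 0 T, m t a = 0)
    (ω : ℝ → ℝ) (hω_smooth : ContDiff ℝ (⊤ : ℕ∞) ω)
    (hω_sub : Function.support ω ⊆ Set.Ico 0 b)
    (φ : ℝ → ℝ) (hφ : ContDiffOn ℝ 2 φ (Set.Ioi 0)) :
    ε * ∫ t in Set.Ioo 0 T, ∫ r in Set.Ioo a b,
        deriv (deriv φ) (ρ t r) * (deriv (fun y => ρ t y) r) ^ (2:ℕ)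
          * (ω r) ^ (2:ℕ) * r ^ (n - 1)
    = -(∫ r in Set.Ioo a b, (φ (ρ T r) - φ (ρ 0 r)) * (ω r) ^ (2:ℕ) * r ^ (n - 1))
      + (∫ t in Set.Ioo 0 T, ∫ r in Set.Ioo a b,
          (φ (ρ t r) - ρ t r * deriv φ (ρ t r))
            * deriv (fun y => m t y / ρ t y) r * (ω r) ^ (2:ℕ) * r ^ (n - 1))
      + 2 * (∫ t in Set.Ioo 0 T, ∫ r in Set.Ioo a b,
          φ (ρ t r) * (m t r / ρ t r) * ω r * deriv ω r * r ^ (n - 1))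
      + (∫ t in Set.Ioo 0 T, ∫ r in Set.Ioo a b,
          ((n - 1 : ℝ) / r) * (φ (ρ t r) - ρ t r * deriv φ (ρ t r))
            * (m t r / ρ t r) * (ω r) ^ (2:ℕ) * r ^ (n - 1))
      - 2 * ε * (∫ t in Set.Ioo 0 T, ∫ r in Set.Ioo a b,
          deriv φ (ρ t r) * deriv (fun y => ρ t y) r * ω r * deriv ω r * r ^ (n - 1)) := by
  have hab : a ≤ b := by linarith
  have hρK : MapsTo (fun p : ℝ × ℝ => ρ p.1 p.2) (Icc 0 T ×ˢ Icc a b) (Ioi 0) :=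
    fun p hp => hcε.trans_le (hpos _ hp.1 _ hp.2)
  have hρK' : ∀ p ∈ Icc 0 T ×ˢ Icc a b, ρ p.1 p.2 ≠ 0 := fun p hp => (hρK hp).ne'
  have hrK : ∀ p ∈ Icc (0 : ℝ) T ×ˢ Icc a b, p.2 ≠ 0 := fun p hp => (ha0.trans_le hp.2.1).ne'
  have hφ' : ContDiffOn ℝ 1 (deriv φ) (Ioi 0) := hφ.deriv_of_isOpen isOpen_Ioi (by norm_num)
  have := hφ.continuousOn
  have := hφ'.continuousOn
  have := hφ'.continuousOn_deriv_of_isOpen isOpen_Ioi le_rfl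
  have := hρ_smooth.continuous
  have := hm_smooth.continuous
  have hωc := hω_smooth.continuous
  have := hω_smooth.continuous_deriv (by simp)
  have : ContinuousOn (fun p : ℝ × ℝ => deriv (fun y => ρ p.1 y) p.2) (Icc 0 T ×ˢ Icc a b) :=
    (contDiff_uncurry_deriv_snd hρ_smooth).continuous.continuousOn
  have : ContinuousOn (fun p : ℝ × ℝ => deriv (fun s => ρ s p.2) p.1) (Icc 0 T ×ˢ Icc a b) :=
    (contDiff_uncurry_deriv_fst hρ_smooth).continuous.continuousOn
  have := continuousOn_deriv_div_snd hm_smooth hρ_smooth hρK'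
  rw [← integral_integral_Ioo_deriv_comp_fst hT.le hρ_smooth hρK (hφ.of_le one_le_two) isOpen_Ioi
    hωc]
  refine integral_integral_Ioo_eq_of_balance_eq_zero ?_ ?_ ?_ ?_ ?_ ?_
    (integral_integral_Ioo_eq_zero_of_hasDerivAt_snd
      (Φ := fun t => renormalizedFlux n ε φ ω (ρ t) (m t)) hab ?_ ?flux (fun t ht r hr => ?deriv)
      fun t ht => ?boundary)
  case deriv =>
    have hK : (t, r) ∈ Icc 0 T ×ˢ Icc a b := ⟨Ioo_subset_Icc_self ht, Ioo_subset_Icc_self hr⟩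
    exact hasDerivAt_renormalizedFlux (by omega) (hrK _ hK) (hρK' _ hK)
      (differentiableAt_apply_of_contDiff_uncurry hρ_smooth t r)
      (differentiableAt_apply_of_contDiff_uncurry (contDiff_uncurry_deriv_snd hρ_smooth) t r)
      (differentiableAt_apply_of_contDiff_uncurry hm_smooth t r)
      ((hω_smooth.differentiable (by simp)) r)
      ((hφ.contDiffAt (isOpen_Ioi.mem_nhds (hρK hK))).differentiableAt two_ne_zero)
      ((hφ'.contDiffAt (isOpen_Ioi.mem_nhds (hρK hK))).differentiableAt one_ne_zero)
      (continuity_eq t ht r hr)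
  case boundary =>
    have hωb : ω b = 0 := by_contra fun h => lt_irrefl b (hω_sub h).2
    have ht' := Ioo_subset_Icc_self ht
    simp [renormalizedFlux, bc_ρr t ht', bc_ma t ht', hωb]
  case flux =>
    unfold renormalizedFlux
    fun_prop (disch := assumption)
  all_goals fun_prop (disch := assumption)

/-- under the Viscous Setup (only the viscous continuity equation and the
boundary conditions are needed), for any cutoff `ω ∈ C_c^∞(ℝ)` with support in `[0,b)`
and any `C²` function `φ` on `(0,∞)`, the identity obtained by testing the continuity
equation with `φ'(ρ)ω²` holds:
`ε∫₀^T∫_a^b φ''(ρ)ρ_r² ω² r^{n−1}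
  = −∫_a^b [φ(ρ(T)) − φ(ρ(0))] ω² r^{n−1}
  + ∫₀^T∫_a^b (φ(ρ) − ρφ'(ρ)) u_r ω² r^{n−1}
  + 2∫₀^T∫_a^b φ(ρ) u ω ω_r r^{n−1}
  + ∫₀^T∫_a^b ((n−1)/r)(φ(ρ) − ρφ'(ρ)) u ω² r^{n−1}
  − 2ε∫₀^T∫_a^b φ'(ρ)ρ_r ω ω_r r^{n−1}`, where `u = m/ρ`. -/
theorem continuity_renormalized_identity
    (n : ℕ) (hn : 2 ≤ n) (γ : ℝ) (hγ : 1 < γ)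
    (T ε δ a b ρbar cε : ℝ) (hT : 0 < T) (hε : 0 < ε) (hδ : 0 < δ)
    (ha0 : 0 < a) (ha1 : a < 1) (hb : 1 < b) (hρbar : 0 < ρbar) (hcε : 0 < cε)
    (ρ m : ℝ → ℝ → ℝ)
    (hρ_smooth : ContDiff ℝ (⊤ : ℕ∞) (Function.uncurry ρ))
    (hm_smooth : ContDiff ℝ (⊤ : ℕ∞) (Function.uncurry m))
    (hpos : ∀ t ∈ Set.Icc 0 T, ∀ r ∈ Set.Icc a b, cε ≤ ρ t r)
    (continuity_eq : ∀ t ∈ Set.Ioo 0 T, ∀ r ∈ Set.Ioo a b,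
      r ^ (n - 1) * deriv (fun s => ρ s r) t + deriv (fun y => y ^ (n - 1) * m t y) r
        = ε * deriv (fun y => y ^ (n - 1) * deriv (fun z => ρ t z) y) r)
    (bc_ρr : ∀ t ∈ Set.Icc 0 T, deriv (fun y => ρ t y) a = 0)
    (bc_ma : ∀ t ∈ Set.Icc 0 T, m t a = 0)
    (bc_ρb : ∀ t ∈ Set.Icc 0 T, ρ t b = ρbar)
    (bc_mb : ∀ t ∈ Set.Icc 0 T, m t b = 0)
    (ω : ℝ → ℝ) (hω_smooth : ContDiff ℝ (⊤ : ℕ∞) ω) (hω_supp : HasCompactSupport ω)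
    (hω_sub : Function.support ω ⊆ Set.Ico 0 b)
    (φ : ℝ → ℝ) (hφ : ContDiffOn ℝ 2 φ (Set.Ioi 0)) :
    ε * ∫ t in Set.Ioo 0 T, ∫ r in Set.Ioo a b,
        deriv (deriv φ) (ρ t r) * (deriv (fun y => ρ t y) r) ^ (2:ℕ)
          * (ω r) ^ (2:ℕ) * r ^ (n - 1)
    = -(∫ r in Set.Ioo a b, (φ (ρ T r) - φ (ρ 0 r)) * (ω r) ^ (2:ℕ) * r ^ (n - 1))
      + (∫ t in Set.Ioo 0 T, ∫ r in Set.Ioo a b,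
          (φ (ρ t r) - ρ t r * deriv φ (ρ t r))
            * deriv (fun y => m t y / ρ t y) r * (ω r) ^ (2:ℕ) * r ^ (n - 1))
      + 2 * (∫ t in Set.Ioo 0 T, ∫ r in Set.Ioo a b,
          φ (ρ t r) * (m t r / ρ t r) * ω r * deriv ω r * r ^ (n - 1))
      + (∫ t in Set.Ioo 0 T, ∫ r in Set.Ioo a b,
          ((n - 1 : ℝ) / r) * (φ (ρ t r) - ρ t r * deriv φ (ρ t r))
            * (m t r / ρ t r) * (ω r) ^ (2:ℕ) * r ^ (n - 1))
      - 2 * ε * (∫ t in Set.Ioo 0 T, ∫ r in Set.Ioo a b,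
          deriv φ (ρ t r) * deriv (fun y => ρ t y) r * ω r * deriv ω r * r ^ (n - 1)) :=
  continuity_renormalized_identity_general n hn T ε a b cε hT ha0 ha1 hb hcε ρ m hρ_smooth hm_smooth
    hpos continuity_eq bc_ρr bc_ma ω hω_smooth hω_sub φ hφ

end
end

section
/- Fix γ > 1 and κ > 0, and for δ ≥ 0 set h_δ(ρ) = κρ^γ/(γ−1) + δρ² and h̄_δ(ρ,ρ̄) = h_δ(ρ) − h_δ(ρ̄) − h_δ'(ρ̄)(ρ−ρ̄). Then there exists a constant M > 0, depending only on γ and κ, such that for all δ ∈ [0,1], all ρ̄ ∈ [0,1], and all ρ ≥ 0, ρ + ρ^γ ≤ M(h̄_δ(ρ,ρ̄) + 1). -/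
open MeasureTheory Real Set

noncomputable section

/-- Convexity (Bernoulli) inequality for the power function. -/
lemma bern_aux {γ : ℝ} (hγ : 1 < γ) {a b : ℝ} (ha : 0 ≤ a) (hb : 0 ≤ b) :
    b ^ γ + γ * b ^ (γ - 1) * (a - b) ≤ a ^ γ := by
  rcases eq_or_lt_of_le hb with rfl | hb
  · rw [Real.zero_rpow (by linarith), Real.zero_rpow (by linarith)]
    simpa using Real.rpow_nonneg ha γ
  · have hb' : b ≠ 0 := ne_of_gt hb
    have hs : (-1 : ℝ) ≤ a / b - 1 := by
      have : 0 ≤ a / b := div_nonneg ha hb.le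
      linarith
    have hber := one_add_mul_self_le_rpow_one_add hs hγ.le
    have h1 : (1 : ℝ) + (a / b - 1) = a / b := by ring
    rw [h1] at hber
    have hdiv : (a / b) ^ γ = a ^ γ / b ^ γ := Real.div_rpow ha hb.le γ
    rw [hdiv] at hber
    have hbγ : 0 < b ^ γ := Real.rpow_pos_of_pos hb γ
    have hmul := mul_le_mul_of_nonneg_left hber hbγ.le
    have hbg1 : b ^ (γ - 1) * b = b ^ γ := by
      rw [← Real.rpow_add_one hb' (γ - 1)]; ring_nf
    have h2 : b ^ γ * (a ^ γ / b ^ γ) = a ^ γ := by field_simp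
    rw [h2] at hmul
    have h3 : b ^ γ * (1 + γ * (a / b - 1)) = b ^ γ + γ * b ^ (γ - 1) * (a - b) := by
      have : b ^ γ * (a / b) = b ^ (γ - 1) * a := by
        rw [← hbg1]; field_simp
      calc b ^ γ * (1 + γ * (a / b - 1))
          = b ^ γ + γ * (b ^ γ * (a / b)) - γ * b ^ γ := by ring
        _ = b ^ γ + γ * b ^ (γ - 1) * (a - b) := by rw [this, ← hbg1]; ring
    rw [h3] at hmul
    exact hmul

/-- for `γ > 1`, `κ > 0`, there is `M > 0` depending only on `γ, κ` such that
for all `δ ∈ [0,1]`, `ρ̄ ∈ [0,1]` and `ρ ≥ 0`, `ρ + ρ^γ ≤ M(h̄_δ(ρ,ρ̄) + 1)`. -/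
theorem rho_add_rho_pow_le_relative_energy (γ κ : ℝ) (hγ : 1 < γ) (hκ : 0 < κ) :
    ∃ M : ℝ, 0 < M ∧ ∀ δ ∈ Set.Icc (0:ℝ) 1, ∀ ρbar ∈ Set.Icc (0:ℝ) 1, ∀ ρ : ℝ, 0 ≤ ρ →
      ρ + ρ ^ γ ≤ M * (hBarDelta γ κ δ ρ ρbar + 1) := by
  have hγ1 : (0:ℝ) < γ - 1 := by linarith
  set c := κ / (γ - 1) with hc_def
  have hc : 0 < c := div_pos hκ hγ1
  set R : ℝ := max 1 ((2 * γ + 2) ^ (γ - 1)⁻¹) with hR_def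
  have hR1 : 1 ≤ R := le_max_left _ _
  have hR0 : 0 ≤ R := by linarith
  have hRpow : 2 * γ + 2 ≤ R ^ (γ - 1) := by
    have h1 : ((2 * γ + 2) ^ (γ - 1)⁻¹) ^ (γ - 1) = 2 * γ + 2 :=
      Real.rpow_inv_rpow (by linarith) (ne_of_gt hγ1)
    calc 2 * γ + 2 = ((2 * γ + 2) ^ (γ - 1)⁻¹) ^ (γ - 1) := h1.symm
      _ ≤ R ^ (γ - 1) :=
        Real.rpow_le_rpow (Real.rpow_nonneg (by linarith) _) (le_max_right _ _) hγ1.le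
  refine ⟨(R + R ^ γ) + 4 / c, ?_, ?_⟩
  · have : 0 < R ^ γ := Real.rpow_pos_of_pos (by linarith) γ
    have : 0 < 4 / c := by positivity
    linarith
  intro δ hδ ρbar hρbar ρ hρ
  obtain ⟨hδ0, hδ1⟩ := hδ
  obtain ⟨hb0, hb1⟩ := hρbar
  set M := (R + R ^ γ) + 4 / c with hM_def
  have hRγpos : 0 < R ^ γ := Real.rpow_pos_of_pos (by linarith) γ
  have hMpos : 0 < M := by
    have : 0 < 4 / c := by positivity
    rw [hM_def]; linarith
  have hMge : R + R ^ γ ≤ M := by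
    have : 0 < 4 / c := by positivity
    rw [hM_def]; linarith
  have hMc : 4 ≤ M * c := by
    have h2 : (4 / c) * c = 4 := by field_simp
    have h3 : 0 ≤ (R + R ^ γ) * c := by positivity
    have h4 : M * c = (R + R ^ γ) * c + (4 / c) * c := by rw [hM_def]; ring
    rw [h2] at h4
    linarith
  clear_value M
  clear hM_def
  -- expansion of hBarDelta
  have hexp : hBarDelta γ κ δ ρ ρbar
      = c * (ρ ^ γ - ρbar ^ γ - γ * ρbar ^ (γ - 1) * (ρ - ρbar)) + δ * (ρ - ρbar) ^ 2 := by
    unfold hBarDelta hDelta hDelta'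
    rw [hc_def]
    field_simp
    ring
  have hconv : 0 ≤ ρ ^ γ - ρbar ^ γ - γ * ρbar ^ (γ - 1) * (ρ - ρbar) := by
    have := bern_aux hγ hρ hb0
    linarith
  have h0 : 0 ≤ hBarDelta γ κ δ ρ ρbar := by
    rw [hexp]
    have : 0 ≤ δ * (ρ - ρbar) ^ 2 := by positivity
    nlinarith
  -- lower bound for hBarDelta
  have hbγ1 : ρbar ^ γ ≤ 1 := Real.rpow_le_one hb0 hb1 (by linarith)
  have hbγ1' : ρbar ^ (γ - 1) ≤ 1 := Real.rpow_le_one hb0 hb1 hγ1.le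
  have hbγ0' : 0 ≤ ρbar ^ (γ - 1) := Real.rpow_nonneg hb0 _
  have hlin : ρbar ^ (γ - 1) * (ρ - ρbar) ≤ ρ := by
    rcases le_or_gt ρbar ρ with h | h
    · calc ρbar ^ (γ - 1) * (ρ - ρbar) ≤ 1 * (ρ - ρbar) :=
          mul_le_mul_of_nonneg_right hbγ1' (by linarith)
        _ ≤ ρ := by linarith
    · have : ρbar ^ (γ - 1) * (ρ - ρbar) ≤ 0 :=
        mul_nonpos_of_nonneg_of_nonpos hbγ0' (by linarith)
      linarith
  have hlow : c * (ρ ^ γ - 1 - γ * ρ) ≤ hBarDelta γ κ δ ρ ρbar := by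
    rw [hexp]
    have h1 : ρ ^ γ - 1 - γ * ρ ≤ ρ ^ γ - ρbar ^ γ - γ * ρbar ^ (γ - 1) * (ρ - ρbar) := by
      have hγ0 : (0:ℝ) < γ := by linarith
      nlinarith [mul_le_mul_of_nonneg_left hlin hγ0.le]
    have h2 : 0 ≤ δ * (ρ - ρbar) ^ 2 := by positivity
    nlinarith [mul_le_mul_of_nonneg_left h1 hc.le]
  rcases le_or_gt ρ R with hcase | hcase
  · -- small ρ
    have hργ : ρ ^ γ ≤ R ^ γ := Real.rpow_le_rpow hρ hcase (by linarith)
    have hM : ρ + ρ ^ γ ≤ M := by linarith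
    calc ρ + ρ ^ γ ≤ M := hM
      _ = M * 1 := by ring
      _ ≤ M * (hBarDelta γ κ δ ρ ρbar + 1) := by
        apply mul_le_mul_of_nonneg_left _ hMpos.le
        linarith
  · -- large ρ
    have hρ1 : 1 ≤ ρ := le_trans hR1 hcase.le
    have hρ0 : ρ ≠ 0 := by linarith
    have hρpow : R ^ (γ - 1) ≤ ρ ^ (γ - 1) := Real.rpow_le_rpow hR0 hcase.le hγ1.le
    have hsplit : ρ ^ γ = ρ ^ (γ - 1) * ρ := by
      rw [← Real.rpow_add_one hρ0 (γ - 1)]; ring_nf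
    have hbig : (2 * γ + 2) * ρ ≤ ρ ^ γ := by
      rw [hsplit]
      apply mul_le_mul_of_nonneg_right _ hρ
      linarith
    have hkey : ρ ^ γ / 2 ≤ ρ ^ γ - 1 - γ * ρ := by nlinarith
    have hργρ : ρ ≤ ρ ^ γ := by
      calc ρ = ρ ^ (1:ℝ) := (Real.rpow_one ρ).symm
        _ ≤ ρ ^ γ := Real.rpow_le_rpow_of_exponent_le hρ1 hγ.le
    have hlow2 : c * (ρ ^ γ / 2) ≤ hBarDelta γ κ δ ρ ρbar + 1 := by
      have := mul_le_mul_of_nonneg_left hkey hc.le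
      linarith
    have hργ0 : 0 ≤ ρ ^ γ := Real.rpow_nonneg hρ γ
    have hfinal : 2 * ρ ^ γ ≤ M * (hBarDelta γ κ δ ρ ρbar + 1) := by
      calc 2 * ρ ^ γ = 4 * (ρ ^ γ / 2) := by ring
        _ ≤ (M * c) * (ρ ^ γ / 2) := mul_le_mul_of_nonneg_right hMc (by positivity)
        _ = M * (c * (ρ ^ γ / 2)) := by ring
        _ ≤ M * (hBarDelta γ κ δ ρ ρbar + 1) :=
          mul_le_mul_of_nonneg_left hlow2 hMpos.le
    linarith
end
end
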